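/- arXiv:2104.14967 — 4 statements merged into one kernel-verified Lean document; each statement's English description precedes it below -/
import Mathlib

section
/- If G is a finite non-abelian group, then |G| is an eigenvalue of the Laplacian matrix of the commuting graph C_G with multiplicity at least |Z(G)|, where Z(G) is the center of G. -/
/-- The commuting graph of a group: distinct vertices are adjacent iff they commute. -/
def commGraph (G : Type*) [Group G] : SimpleGraph G where
  Adj u v := u ≠ v ∧ u * v = v * u
  symm := ⟨fun _ _ h => ⟨h.1.symm, h.2.symm⟩⟩
  loopless := ⟨fun _ h => h.1 rfl⟩

instance {G : Type*} [Group G] [DecidableEq G] : DecidableRel (commGraph G).Adj :=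
  fun _ _ => instDecidableAnd

/-- The Laplacian matrix of the commuting graph. -/
noncomputable def commLap (G : Type*) [Group G] [Fintype G] [DecidableEq G] :
    Matrix G G ℝ :=
  SimpleGraph.lapMatrix ℝ (commGraph G)

/-- Multiplicity of `μ` as an eigenvalue of the Laplacian of the commuting graph. -/
noncomputable def lapMult (G : Type*) [Group G] [Fintype G] [DecidableEq G] (μ : ℝ) : ℕ :=
  Module.finrank ℝ (LinearMap.ker (Matrix.toLin' (commLap G - μ • 1)))

/-- Centralizer of an element, as a set. -/
def centSet {G : Type*} [Group G] (u : G) : Set G := {x | x * u = u * x}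

/-- Edge boundary of a set in the commuting graph. -/
def edgeBoundary (G : Type*) [Group G] (S : Set G) : Set (Sym2 G) :=
  {e | e ∈ (commGraph G).edgeSet ∧ ∃ u ∈ S, ∃ v ∈ Sᶜ, e = s(u, v)}

/-!
For a graph `Γ` on `n` vertices, `L(Γ) + L(Γᶜ) = n • 1 - J`, so every vector with coordinate sum
zero in the kernel of `L(Γᶜ)` is an eigenvector of `L(Γ)` for `n`. The kernel of `L(Γᶜ)` consists
of the vectors constant on the connected components of `Γᶜ`, so the multiplicity of `n` is at least
the number of components of `Γᶜ` minus one. In the complement of the commuting graph the central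
elements are isolated, and a non-central element (which exists because `G` is non-abelian) lies in
yet another component, so there are at least `|Z(G)| + 1` components.
-/

open Finset Matrix

theorem Submodule.finrank_le_finrank_inf_ker_add_one {K V : Type*} [Field K] [AddCommGroup V]
    [Module K V] [FiniteDimensional K V] (p : Submodule K V) (f : Module.Dual K V) :
    Module.finrank K p ≤ Module.finrank K ↥(p ⊓ LinearMap.ker f) + 1 := by
  have h₁ := Submodule.finrank_sup_add_finrank_inf_eq p (LinearMap.ker f)
  have h₂ := LinearMap.finrank_range_add_finrank_ker f
  have h₃ := (LinearMap.range f).finrank_le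
  have h₄ := (p ⊔ LinearMap.ker f).finrank_le
  rw [Module.finrank_self] at h₃
  omega

namespace SimpleGraph

theorem IsIsolated.reachable_iff {V : Type*} {G : SimpleGraph V} {v w : V}
    (hv : G.IsIsolated v) : G.Reachable v w ↔ v = w := by
  refine ⟨fun ⟨p⟩ => ?_, fun h => h ▸ Reachable.refl v⟩
  cases p with
  | nil => rfl
  | cons h _ => exact absurd h (hv _)

theorem card_add_one_le_card_connectedComponent {V : Type*} [DecidableEq V] {G : SimpleGraph V}
    [Fintype G.ConnectedComponent] {S : Finset V} (hS : ∀ v ∈ S, G.IsIsolated v) {a : V}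
    (ha : a ∉ S) : #S + 1 ≤ Fintype.card G.ConnectedComponent := by
  rw [← card_insert_of_notMem ha, ← card_univ]
  refine card_le_card_of_injOn G.connectedComponentMk (fun _ _ => mem_univ _) ?_
  intro x hx y hy hxy
  rw [coe_insert, Set.mem_insert_iff] at hx hy
  rw [ConnectedComponent.eq] at hxy
  rcases hx with rfl | hx
  · rcases hy with rfl | hy
    · rfl
    · exact ((hS y hy).reachable_iff.mp hxy.symm).symm
  · exact (hS x hx).reachable_iff.mp hxy

variable {V : Type*} [Fintype V] [DecidableEq V] (G : SimpleGraph V) [DecidableRel G.Adj]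

theorem lapMatrix_add_lapMatrix_compl {R : Type*} [Ring R] :
    G.lapMatrix R + Gᶜ.lapMatrix R = (Fintype.card V : R) • 1 - of fun _ _ => 1 := by
  ext i j
  rcases eq_or_ne i j with rfl | hij
  · have := G.degree_lt_card_verts i
    simp only [lapMatrix, degMatrix, degree_compl]
    simp [Nat.cast_sub (show 1 ≤ Fintype.card V by omega),
      Nat.cast_sub (show G.degree i ≤ Fintype.card V - 1 by omega)]
  · by_cases h : G.Adj i j <;> simp [lapMatrix, degMatrix, hij, h]

theorem lapMatrix_mulVec_eq_card_smul_of_compl {R : Type*} [Ring R] {x : V → R}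
    (hsum : ∑ i, x i = 0) (hx : Gᶜ.lapMatrix R *ᵥ x = 0) :
    G.lapMatrix R *ᵥ x = (Fintype.card V : R) • x := by
  have hJ : (of fun _ _ => 1 : Matrix V V R) *ᵥ x = 0 := by
    ext; simp [mulVec, dotProduct, hsum]
  rw [eq_sub_of_add_eq (G.lapMatrix_add_lapMatrix_compl (R := R)), sub_mulVec, sub_mulVec, hJ,
    hx, smul_mulVec, one_mulVec, sub_zero, sub_zero]

theorem card_connectedComponent_compl_le_finrank_ker_sub_card_add_one :
    Fintype.card Gᶜ.ConnectedComponent ≤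
      Module.finrank ℝ (LinearMap.ker (toLin' (G.lapMatrix ℝ - (Fintype.card V : ℝ) • 1))) + 1 := by
  let sumDual : Module.Dual ℝ (V → ℝ) := ∑ i, LinearMap.proj i
  have heigen : LinearMap.ker (toLin' (Gᶜ.lapMatrix ℝ)) ⊓ LinearMap.ker sumDual ≤
      LinearMap.ker (toLin' (G.lapMatrix ℝ - (Fintype.card V : ℝ) • 1)) := by
    rintro x ⟨hx, hsum⟩
    have hsum' : ∑ i, x i = 0 := by simpa [sumDual] using hsum
    have hx' : Gᶜ.lapMatrix ℝ *ᵥ x = 0 := by simpa using hx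
    simp [G.lapMatrix_mulVec_eq_card_smul_of_compl hsum' hx']
  rw [card_connectedComponent_eq_finrank_ker_toLin'_lapMatrix]
  exact ((LinearMap.ker _).finrank_le_finrank_inf_ker_add_one sumDual).trans
    (Nat.add_le_add_right (Submodule.finrank_mono heigen) 1)

end SimpleGraph

theorem isIsolated_compl_commGraph_of_mem_center {G : Type*} [Group G] {z : G}
    (hz : z ∈ Subgroup.center G) : (commGraph G)ᶜ.IsIsolated z :=
  SimpleGraph.isIsolated_compl_iff_isUniversal.mpr fun w hzw =>
    ⟨hzw, (Subgroup.mem_center_iff.mp hz w).symm⟩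

/-- For a finite non-abelian group `G`, `|G|` is an eigenvalue of the Laplacian of the
commuting graph with multiplicity at least `|Z(G)|`. -/
theorem card_eigenvalue_mult_ge_card_center (G : Type*) [Group G] [Fintype G]
    [DecidableEq G] (hna : ¬ ∀ a b : G, a * b = b * a) :
    Nat.card (Subgroup.center G) ≤ lapMult G (Fintype.card G) := by
  simp only [not_forall] at hna
  obtain ⟨a, b, hab⟩ := hna
  let Z := univ.filter (· ∈ Subgroup.center G)
  have hZ : Nat.card (Subgroup.center G) = #Z := by
    rw [Nat.card_eq_fintype_card, Fintype.card_subtype]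
  have haZ : a ∉ Z := fun ha => hab (Subgroup.mem_center_iff.mp (mem_filter.mp ha).2 b).symm
  have hcomponents := SimpleGraph.card_add_one_le_card_connectedComponent
    (fun z hz => isIsolated_compl_commGraph_of_mem_center (mem_filter.mp hz).2) haZ
  have hmult := (commGraph G).card_connectedComponent_compl_le_finrank_ker_sub_card_add_one
  rw [hZ]
  exact Nat.le_of_add_le_add_right (hcomponents.trans hmult)
end

section
/- Let G be a finite non-abelian group and suppose u ∈ G \ Z(G) satisfies: for all v ∈ G \ Z(G), either C(u) = C(v) or C(u) ∩ C(v) = Z(G). Then C(u) is an abelian subgroup of G. -/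
/-! If some `x ∈ C(u)` did not commute with some `y ∈ C(u)`, then `x` is not central and
`C(u) ≠ C(x)`, so the hypothesis forces `C(u) ∩ C(x) = Z(G)`; but `u` lies in this
intersection and is not central. -/

section

variable {G : Type*} [Group G]

theorem centSet_eq_centralizer (u : G) : centSet u = (Subgroup.centralizer {u} : Set G) := by
  ext x
  simp [centSet, Subgroup.mem_centralizer_iff, eq_comm]

theorem mem_centSet_self (u : G) : u ∈ centSet u := rfl

theorem mem_centSet_comm {u x : G} : x ∈ centSet u ↔ u ∈ centSet x := eq_comm

end

theorem centralizer_abelian_subgroup_general (G : Type*) [Group G] (u : G)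
    (hu : u ∉ (Subgroup.center G : Set G))
    (hcond : ∀ v : G, v ∉ (Subgroup.center G : Set G) →
      centSet u = centSet v ∨ centSet u ∩ centSet v = (Subgroup.center G : Set G)) :
    (∃ H : Subgroup G, (H : Set G) = centSet u) ∧
      ∀ x ∈ centSet u, ∀ y ∈ centSet u, x * y = y * x := by
  refine ⟨⟨_, (centSet_eq_centralizer u).symm⟩, fun x hx y hy => ?_⟩
  by_cases hxz : x ∈ (Subgroup.center G : Set G)
  · exact (Subgroup.mem_center_iff.mp hxz y).symm
  obtain h | h := hcond x hxz
  · exact (h ▸ hy : y ∈ centSet x).symm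
  · exact absurd (h ▸ ⟨mem_centSet_self u, mem_centSet_comm.mp hx⟩) hu

/-- If `u ∉ Z(G)` satisfies: for all `v ∉ Z(G)`, `C(u) = C(v)` or `C(u) ∩ C(v) = Z(G)`,
then `C(u)` is an abelian subgroup of `G`. -/
theorem centralizer_abelian_subgroup (G : Type*) [Group G] [Fintype G]
    (hna : ¬ ∀ a b : G, a * b = b * a) (u : G)
    (hu : u ∉ (Subgroup.center G : Set G))
    (hcond : ∀ v : G, v ∉ (Subgroup.center G : Set G) →
      centSet u = centSet v ∨ centSet u ∩ centSet v = (Subgroup.center G : Set G)) :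
    (∃ H : Subgroup G, (H : Set G) = centSet u) ∧
      ∀ x ∈ centSet u, ∀ y ∈ centSet u, x * y = y * x :=
  centralizer_abelian_subgroup_general G u hu hcond
end

section
/- Let G be a finite non-abelian group such that for all u, v ∈ G \ Z(G), either C(u) = C(v) or C(u) ∩ C(v) = Z(G). Then the induced subgraph of the commuting graph C_G on the vertex set G \ Z(G) is disconnected. -/
theorem SimpleGraph.Reachable.eq_of_forall_adj {V β : Type*} {Γ : SimpleGraph V} {u v : V}
    (h : Γ.Reachable u v) {f : V → β} (hf : ∀ x y, Γ.Adj x y → f x = f y) : f u = f v := by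
  rw [SimpleGraph.reachable_iff_reflTransGen] at h
  induction h with
  | refl => rfl
  | tail _ hadj ih => exact ih.trans (hf _ _ hadj)

section Centralizer

variable {G : Type*} [Group G]

theorem mem_centSet_iff {u x : G} : x ∈ centSet u ↔ x * u = u * x := Iff.rfl

theorem centSet_eq_of_commute {u v : G} (hv : v ∉ (Subgroup.center G : Set G))
    (huv : u * v = v * u)
    (h : centSet u = centSet v ∨ centSet u ∩ centSet v = (Subgroup.center G : Set G)) :
    centSet u = centSet v := by
  refine h.resolve_right fun hint => hv ?_
  rw [← hint]
  exact ⟨huv.symm, mem_centSet_self v⟩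

theorem not_mem_center_of_mul_ne {a b : G} (hab : a * b ≠ b * a) :
    a ∉ (Subgroup.center G : Set G) ∧ b ∉ (Subgroup.center G : Set G) :=
  ⟨fun ha => hab ((Subgroup.mem_center_iff.mp ha b).symm),
    fun hb => hab (Subgroup.mem_center_iff.mp hb a)⟩

theorem centSet_ne_of_mul_ne {a b : G} (hab : a * b ≠ b * a) : centSet a ≠ centSet b :=
  fun h => hab (mem_centSet_iff.1 (h ▸ mem_centSet_self a))

end Centralizer

theorem induced_subgraph_disconnected_general (G : Type*) [Group G]
    (hna : ¬ ∀ a b : G, a * b = b * a)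
    (hcond : ∀ u v : G, u ∉ (Subgroup.center G : Set G) →
      v ∉ (Subgroup.center G : Set G) →
      centSet u = centSet v ∨ centSet u ∩ centSet v = (Subgroup.center G : Set G)) :
    ¬ ((commGraph G).induce ((Subgroup.center G : Set G)ᶜ)).Preconnected := by
  intro hconn
  simp only [not_forall] at hna
  obtain ⟨a, b, hab⟩ := hna
  obtain ⟨ha, hb⟩ := not_mem_center_of_mul_ne hab
  exact centSet_ne_of_mul_ne hab <| (hconn ⟨a, ha⟩ ⟨b, hb⟩).eq_of_forall_adj
    (f := fun u => centSet u.1)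
    fun u v huv => centSet_eq_of_commute v.2 huv.2 (hcond u v u.2 v.2)

/-- If for all `u, v ∉ Z(G)`, `C(u) = C(v)` or `C(u) ∩ C(v) = Z(G)`, then the induced
subgraph of the commuting graph on `G \ Z(G)` is disconnected. -/
theorem induced_subgraph_disconnected (G : Type*) [Group G] [Fintype G]
    (hna : ¬ ∀ a b : G, a * b = b * a)
    (hcond : ∀ u v : G, u ∉ (Subgroup.center G : Set G) →
      v ∉ (Subgroup.center G : Set G) →
      centSet u = centSet v ∨ centSet u ∩ centSet v = (Subgroup.center G : Set G)) :
    ¬ ((commGraph G).induce ((Subgroup.center G : Set G)ᶜ)).Preconnected :=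
  induced_subgraph_disconnected_general G hna hcond
end

section
/- Let G be a finite non-abelian group and S ⊆ G with Z(G) ⊆ S and 0 < |S| ≤ |G|/2. Then the edge boundary of S in the commuting graph C_G satisfies |∂S| ≥ |S|·|Z(G)|. -/
/-! Every central element of `S` commutes with every element outside `S`, so `(z, v) ↦ {z, v}`
embeds `Z(G) × Sᶜ` into `∂S`; and `|S| ≤ |G|/2` gives `|S| ≤ |Sᶜ|`. -/

theorem mk_mem_edgeBoundary {G : Type*} [Group G] {S : Set G} {u v : G} (hu : u ∈ S)
    (hv : v ∉ S) (huv : u * v = v * u) : s(u, v) ∈ edgeBoundary G S :=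
  ⟨⟨fun h : u = v => hv (h ▸ hu), huv⟩, u, hu, v, hv, rfl⟩

theorem card_center_mul_card_compl_le_card_edgeBoundary {G : Type*} [Group G] [Finite G]
    {S : Set G} (hZS : (Subgroup.center G : Set G) ⊆ S) :
    Nat.card (Subgroup.center G) * Nat.card (Sᶜ : Set G) ≤ Nat.card (edgeBoundary G S) := by
  let f : Subgroup.center G × (Sᶜ : Set G) → edgeBoundary G S := fun p =>
    ⟨s(p.1, p.2),
      mk_mem_edgeBoundary (hZS p.1.2) p.2.2 (Subgroup.mem_center_iff.mp p.1.2 p.2).symm⟩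
  have hf : Function.Injective f := by
    rintro ⟨⟨z, hz⟩, ⟨v, hv⟩⟩ ⟨⟨z', hz'⟩, ⟨v', hv'⟩⟩ h
    rcases Sym2.eq_iff.mp (congrArg Subtype.val h) with ⟨rfl, rfl⟩ | ⟨rfl, -⟩
    · rfl
    · exact absurd (hZS hz) hv'
  rw [← Nat.card_prod]
  exact Nat.card_le_card_of_injective f hf

theorem card_le_card_compl_of_card_le_half {G : Type*} [Fintype G] {S : Set G}
    (hhalf : (Nat.card S : ℝ) ≤ (Fintype.card G : ℝ) / 2) :
    Nat.card S ≤ Nat.card (Sᶜ : Set G) := by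
  have hsum : Nat.card S + Nat.card (Sᶜ : Set G) = Fintype.card G := by
    rw [Nat.card_coe_set_eq, Nat.card_coe_set_eq, Set.ncard_add_ncard_compl,
      Nat.card_eq_fintype_card]
  have hsum' : (Nat.card S : ℝ) + Nat.card (Sᶜ : Set G) = Fintype.card G := mod_cast hsum
  exact_mod_cast (by linarith : (Nat.card S : ℝ) ≤ Nat.card (Sᶜ : Set G))

theorem edge_boundary_lower_bound_of_center_subset_general (G : Type*) [Group G] [Fintype G]
    (S : Set G)
    (hZS : (Subgroup.center G : Set G) ⊆ S)
    (hhalf : (Nat.card S : ℝ) ≤ (Fintype.card G : ℝ) / 2) :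
    Nat.card S * Nat.card (Subgroup.center G) ≤ Nat.card (edgeBoundary G S) :=
  calc Nat.card S * Nat.card (Subgroup.center G)
      ≤ Nat.card (Sᶜ : Set G) * Nat.card (Subgroup.center G) :=
        Nat.mul_le_mul_right _ (card_le_card_compl_of_card_le_half hhalf)
    _ = Nat.card (Subgroup.center G) * Nat.card (Sᶜ : Set G) := Nat.mul_comm _ _
    _ ≤ Nat.card (edgeBoundary G S) := card_center_mul_card_compl_le_card_edgeBoundary hZS

/-- For a finite non-abelian group and `S ⊆ G` with `Z(G) ⊆ S` and `0 < |S| ≤ |G|/2`, the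
edge boundary of `S` in the commuting graph satisfies `|∂S| ≥ |S|·|Z(G)|`. -/
theorem edge_boundary_lower_bound_of_center_subset (G : Type*) [Group G] [Fintype G]
    (hna : ¬ ∀ a b : G, a * b = b * a) (S : Set G)
    (hZS : (Subgroup.center G : Set G) ⊆ S)
    (hpos : 0 < Nat.card S)
    (hhalf : (Nat.card S : ℝ) ≤ (Fintype.card G : ℝ) / 2) :
    Nat.card S * Nat.card (Subgroup.center G) ≤ Nat.card (edgeBoundary G S) :=
  edge_boundary_lower_bound_of_center_subset_general G S hZS hhalf
end
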